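/- arXiv:2601.01055 — 3 statements merged into one kernel-verified Lean document; each statement's English description precedes it below -/
import Mathlib

section
/- Let E be a real Banach space, let β, γ ≥ 0 with β + γ < 1, let (η_t)_{t≥0} be a summable sequence of nonnegative reals, let B > 0, and let (h_t)_{t≥0} be a sequence in E with ‖h_t‖ ≤ B for all t. Define the sequence (F_t) by F_0 = 0, F_1 = η_0·h_0, and F_{t+2} = β·F_{t+1} + γ·F_t + η_{t+1}·h_{t+1} for all t ≥ 0. Then (F_t) is a Cauchy sequence and converges in norm to a limit F⋆ ∈ E. -/
/-!
The increments `d t = ‖F t - F (t + 1)‖` satisfy the scalar inequality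
`d (t + 2) ≤ β d (t + 1) + γ d t + e t` with a summable forcing term `e`. Summing it, every
partial sum `S` of `d` obeys `S ≤ d 0 + d 1 + (β + γ) S + ∑ e`, and `β + γ < 1` bounds `S`
uniformly. Hence `d` is summable, so `F` is Cauchy and converges by completeness.
-/

open Finset

theorem summable_of_le_two_step {β γ : ℝ} (hβ : 0 ≤ β) (hγ : 0 ≤ γ) (hβγ : β + γ < 1)
    {d e : ℕ → ℝ} (hd : ∀ t, 0 ≤ d t) (he : ∀ t, 0 ≤ e t) (he_sum : Summable e)
    (hrec : ∀ t, d (t + 2) ≤ β * d (t + 1) + γ * d t + e t) : Summable d := by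
  set S : ℕ → ℝ := fun n => ∑ i ∈ range n, d i
  have hS_mono : Monotone S := fun m n hmn =>
    sum_mono_set_of_nonneg hd (range_subset_range.2 hmn)
  have hS_shift (n : ℕ) : ∑ i ∈ range n, d (i + 1) ≤ S (n + 2) := by
    have : ∑ i ∈ range n, d (i + 1) + d 0 = S (n + 1) := (sum_range_succ' d n).symm
    linarith [hd 0, hS_mono (Nat.le_succ (n + 1))]
  have hS_rec (n : ℕ) : S (n + 2) ≤ d 0 + d 1 + (β + γ) * S (n + 2) + ∑' t, e t :=
    calc S (n + 2) = ∑ i ∈ range n, d (i + 2) + d 1 + d 0 := by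
          simp only [S, sum_range_succ']
      _ ≤ ∑ i ∈ range n, (β * d (i + 1) + γ * d i + e i) + d 1 + d 0 := by
          gcongr with i; exact hrec i
      _ = β * ∑ i ∈ range n, d (i + 1) + γ * S n + ∑ i ∈ range n, e i + d 1 + d 0 := by
          simp only [S, sum_add_distrib, mul_sum]
      _ ≤ β * S (n + 2) + γ * S (n + 2) + ∑' t, e t + d 1 + d 0 := by
          gcongr
          · exact hS_shift n
          · exact hS_mono (by omega)
          · exact he_sum.sum_le_tsum _ fun t _ => he t
      _ = d 0 + d 1 + (β + γ) * S (n + 2) + ∑' t, e t := by ring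
  refine summable_of_sum_range_le (c := (d 0 + d 1 + ∑' t, e t) / (1 - (β + γ))) hd
    fun n => ?_
  calc S n ≤ S (n + 2) := hS_mono (by omega)
    _ ≤ (d 0 + d 1 + ∑' t, e t) / (1 - (β + γ)) := by
        rw [le_div_iff₀ (by linarith)]
        linarith [hS_rec n]

theorem cauchySeq_of_two_step_recurrence {E : Type*} [SeminormedAddCommGroup E]
    [NormedSpace ℝ E] {β γ : ℝ} (hβ : 0 ≤ β) (hγ : 0 ≤ γ) (hβγ : β + γ < 1)
    {g F : ℕ → E} (hg : Summable fun t => ‖g t‖)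
    (hF : ∀ t, F (t + 2) = β • F (t + 1) + γ • F t + g (t + 1)) : CauchySeq F := by
  apply cauchySeq_of_summable_dist
  have hincr (t : ℕ) : F (t + 2) - F (t + 3) =
      β • (F (t + 1) - F (t + 2)) + γ • (F t - F (t + 1)) + (g (t + 1) - g (t + 2)) := by
    have hF3 : F (t + 3) = β • F (t + 2) + γ • F (t + 1) + g (t + 2) := hF (t + 1)
    rw [hF3, hF t]
    module
  refine summable_of_le_two_step hβ hγ hβγ (fun t => dist_nonneg)
    (e := fun t => ‖g (t + 1)‖ + ‖g (t + 2)‖) (fun t => by positivity)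
    (((summable_nat_add_iff 1).2 hg).add ((summable_nat_add_iff 2).2 hg)) fun t => ?_
  calc dist (F (t + 2)) (F (t + 3))
      = ‖β • (F (t + 1) - F (t + 2)) + γ • (F t - F (t + 1)) + (g (t + 1) - g (t + 2))‖ := by
        rw [dist_eq_norm, hincr]
    _ ≤ ‖β • (F (t + 1) - F (t + 2))‖ + ‖γ • (F t - F (t + 1))‖ + ‖g (t + 1) - g (t + 2)‖ :=
        norm_add₃_le
    _ ≤ β * dist (F (t + 1)) (F (t + 2)) + γ * dist (F t) (F (t + 1))
          + (‖g (t + 1)‖ + ‖g (t + 2)‖) := by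
        rw [norm_smul, norm_smul, Real.norm_of_nonneg hβ, Real.norm_of_nonneg hγ,
          ← dist_eq_norm, ← dist_eq_norm]
        gcongr
        exact norm_sub_le _ _

theorem fibonacci_ensemble_converges_general
    {E : Type*} [NormedAddCommGroup E] [NormedSpace ℝ E] [CompleteSpace E]
    (β γ : ℝ) (hβ : 0 ≤ β) (hγ : 0 ≤ γ) (hβγ : β + γ < 1)
    (η : ℕ → ℝ) (hηsum : Summable η)
    (B : ℝ) (h : ℕ → E) (hh : ∀ t, ‖h t‖ ≤ B)
    (F : ℕ → E)
    (hFrec : ∀ t : ℕ, F (t + 2) = β • F (t + 1) + γ • F t + η (t + 1) • h (t + 1)) :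
    CauchySeq F ∧ ∃ Fstar : E, Filter.Tendsto F Filter.atTop (nhds Fstar) := by
  have hg : Summable fun t => ‖η t • h t‖ :=
    hηsum.abs.mul_right B |>.of_norm_bounded fun t => by
      rw [norm_norm, norm_smul, Real.norm_eq_abs]
      exact mul_le_mul_of_nonneg_left (hh t) (abs_nonneg _)
  have hF : CauchySeq F := cauchySeq_of_two_step_recurrence hβ hγ hβγ hg hFrec
  exact ⟨hF, cauchySeq_tendsto_of_complete hF⟩

/-- Convergence of the Fibonacci-type recursive ensemble in a real Banach space:
if `β, γ ≥ 0` with `β + γ < 1`, the step sizes `η_t ≥ 0` are summable, and the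
base learners are uniformly bounded by `B`, then the sequence `F_t` defined by
`F_0 = 0`, `F_1 = η_0 • h_0`, `F_{t+2} = β • F_{t+1} + γ • F_t + η_{t+1} • h_{t+1}`
is Cauchy and converges in norm to some limit `F⋆ ∈ E`. -/
theorem fibonacci_ensemble_converges
    {E : Type*} [NormedAddCommGroup E] [NormedSpace ℝ E] [CompleteSpace E]
    (β γ : ℝ) (hβ : 0 ≤ β) (hγ : 0 ≤ γ) (hβγ : β + γ < 1)
    (η : ℕ → ℝ) (hη : ∀ t, 0 ≤ η t) (hηsum : Summable η)
    (B : ℝ) (hB : 0 < B) (h : ℕ → E) (hh : ∀ t, ‖h t‖ ≤ B)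
    (F : ℕ → E) (hF0 : F 0 = 0) (hF1 : F 1 = η 0 • h 0)
    (hFrec : ∀ t : ℕ, F (t + 2) = β • F (t + 1) + γ • F t + η (t + 1) • h (t + 1)) :
    CauchySeq F ∧ ∃ Fstar : E, Filter.Tendsto F Filter.atTop (nhds Fstar) :=
  fibonacci_ensemble_converges_general β γ hβ hγ hβγ η hηsum B h hh F hFrec
end

section
/- Let E be a real normed vector space, let β, γ ≥ 0, let (η_t)_{t≥0} be nonnegative reals, let δ > 0, and let (d_t)_{t≥0} be a sequence in E with ‖d_t‖ ≤ δ for all t. Define (Δ_t) by Δ_0 = 0, Δ_1 = η_0·d_0, and Δ_{t+2} = β·Δ_{t+1} + γ·Δ_t + η_{t+1}·d_{t+1} for all t ≥ 0. Let r = (β + √(β² + 4γ))/2. Then for every ε > 0 there exists C > 0 such that for all T ≥ 1, ‖Δ_T‖ ≤ C·δ·Σ_{k=0}^{T−1} (r + ε)^{T−1−k}·η_k. -/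
/-- Perturbation propagation through the Fibonacci-type recursion: with
`β, γ ≥ 0`, nonnegative step sizes `η`, uniformly bounded forcing terms
`‖d_t‖ ≤ δ`, the sequence `Δ_0 = 0`, `Δ_1 = η_0 • d_0`,
`Δ_{t+2} = β • Δ_{t+1} + γ • Δ_t + η_{t+1} • d_{t+1}` satisfies, for every
`ε > 0` and some `C > 0`, `‖Δ_T‖ ≤ C·δ·Σ_{k=0}^{T−1} (r + ε)^{T−1−k}·η_k` for
all `T ≥ 1`, where `r = (β + √(β² + 4γ))/2`. -/
theorem perturbation_propagation_bound
    {E : Type*} [NormedAddCommGroup E] [NormedSpace ℝ E]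
    (β γ : ℝ) (hβ : 0 ≤ β) (hγ : 0 ≤ γ)
    (η : ℕ → ℝ) (hη : ∀ t, 0 ≤ η t)
    (δ : ℝ) (hδ : 0 < δ) (d : ℕ → E) (hd : ∀ t, ‖d t‖ ≤ δ)
    (Δ : ℕ → E) (hΔ0 : Δ 0 = 0) (hΔ1 : Δ 1 = η 0 • d 0)
    (hΔrec : ∀ t : ℕ, Δ (t + 2) = β • Δ (t + 1) + γ • Δ t + η (t + 1) • d (t + 1)) :
    ∀ ε > (0 : ℝ), ∃ C > (0 : ℝ), ∀ T : ℕ, 1 ≤ T →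
      ‖Δ T‖ ≤ C * δ * ∑ k ∈ Finset.range T,
        ((β + Real.sqrt (β ^ 2 + 4 * γ)) / 2 + ε) ^ (T - 1 - k) * η k := by
  intro ε hε
  set s := Real.sqrt (β ^ 2 + 4 * γ) with hs_def
  have hs2 : s ^ 2 = β ^ 2 + 4 * γ := Real.sq_sqrt (by nlinarith)
  have hsβ : β ≤ s := by
    rw [hs_def]
    calc β = Real.sqrt (β ^ 2) := by rw [Real.sqrt_sq hβ]
    _ ≤ _ := Real.sqrt_le_sqrt (by nlinarith)
  set ρ := (β + s) / 2 + ε with hρ_def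
  have hβρ : β ≤ ρ := by rw [hρ_def]; linarith
  have hρpos : 0 < ρ := by rw [hρ_def]; linarith
  have hkey : β * ρ + γ ≤ ρ ^ 2 := by
    rw [hρ_def]
    nlinarith [hs2, mul_nonneg hε.le (le_trans hβ hsβ), sq_nonneg ε]
  set S : ℕ → ℝ := fun T => ∑ k ∈ Finset.range T, ρ ^ (T - 1 - k) * η k with hS_def
  have hSrec : ∀ T, S (T + 1) = ρ * S T + η T := by
    intro T
    simp only [hS_def]
    rw [Finset.sum_range_succ, Finset.mul_sum]
    congr 1
    · apply Finset.sum_congr rfl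
      intro k hk
      have hk' : k < T := Finset.mem_range.mp hk
      rw [show T + 1 - 1 - k = (T - 1 - k) + 1 by omega]
      ring
    · simp
  have hSnonneg : ∀ T, 0 ≤ S T := by
    intro T
    apply Finset.sum_nonneg
    intro k _
    exact mul_nonneg (pow_nonneg hρpos.le _) (hη k)
  have main : ∀ T, ‖Δ T‖ ≤ δ * S T := by
    intro T
    induction T using Nat.strong_induction_on with
    | _ T ih =>
      match T with
      | 0 => simp [hΔ0, hS_def]
      | 1 =>
        rw [hΔ1]
        have : S 1 = η 0 := by simp [hS_def]
        rw [this, norm_smul, Real.norm_eq_abs, abs_of_nonneg (hη 0)]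
        calc η 0 * ‖d 0‖ ≤ η 0 * δ := by
              exact mul_le_mul_of_nonneg_left (hd 0) (hη 0)
        _ = δ * η 0 := by ring
      | (t + 2) =>
        have h1 := ih (t + 1) (by omega)
        have h0 := ih t (by omega)
        rw [hΔrec t]
        calc ‖β • Δ (t + 1) + γ • Δ t + η (t + 1) • d (t + 1)‖
            ≤ ‖β • Δ (t + 1) + γ • Δ t‖ + ‖η (t + 1) • d (t + 1)‖ := norm_add_le _ _
          _ ≤ ‖β • Δ (t + 1)‖ + ‖γ • Δ t‖ + ‖η (t + 1) • d (t + 1)‖ := by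
              gcongr; exact norm_add_le _ _
          _ = β * ‖Δ (t + 1)‖ + γ * ‖Δ t‖ + η (t + 1) * ‖d (t + 1)‖ := by
              rw [norm_smul, norm_smul, norm_smul, Real.norm_eq_abs,
                Real.norm_eq_abs, Real.norm_eq_abs, abs_of_nonneg hβ,
                abs_of_nonneg hγ, abs_of_nonneg (hη _)]
          _ ≤ β * (δ * S (t + 1)) + γ * (δ * S t) + η (t + 1) * δ := by
              gcongr <;> first | exact hη _ | exact hd _
          _ ≤ δ * S (t + 2) := by
              rw [hSrec (t + 1), hSrec t]
              have hSt := hSnonneg t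
              have hηt := hη t
              have hηt1 := hη (t + 1)
              nlinarith [mul_nonneg (mul_nonneg hδ.le hSt)
                  (show (0:ℝ) ≤ ρ ^ 2 - (β * ρ + γ) by linarith),
                mul_nonneg (mul_nonneg hδ.le hηt)
                  (show (0:ℝ) ≤ ρ - β by linarith)]
  refine ⟨1, one_pos, fun T _ => ?_⟩
  calc ‖Δ T‖ ≤ δ * S T := main T
    _ = 1 * δ * ∑ k ∈ Finset.range T, ρ ^ (T - 1 - k) * η k := by rw [hS_def]; ring
end

section
/- Let E be a real normed vector space, let β, γ ≥ 0 with β + γ < 1, let c > 0 and 0 ≤ ρ₀ < 1, let (η_t)_{t≥0} satisfy 0 ≤ η_t ≤ c·ρ₀^t for all t, let δ > 0, and let (d_t)_{t≥0} be a sequence in E with ‖d_t‖ ≤ δ for all t. Define (Δ_t) by Δ_0 = 0, Δ_1 = η_0·d_0, and Δ_{t+2} = β·Δ_{t+1} + γ·Δ_t + η_{t+1}·d_{t+1} for all t ≥ 0. Then there exist C > 0 and σ ∈ (0, 1) such that ‖Δ_T‖ ≤ C·δ·σ^T for all T ≥ 0. -/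
/-! Choose `σ < 1` with `ρ₀ < σ` and `β σ + γ < σ²`, possible since `σ ↦ σ² - β σ - γ` is positive
at `σ = 1`. Then the scalar inequality `a_{t+2} ≤ β a_{t+1} + γ a_t + K σ^t` satisfied by
`a_t = ‖Δ_t‖` propagates a bound `a_t ≤ M σ^t` by two-step induction, once `M` absorbs the
forcing term into the gap `σ² - β σ - γ`. -/

open Filter Set Topology

theorem exists_lt_one_mul_add_lt_sq {β γ ρ : ℝ} (hβγ : β + γ < 1) (hρ : ρ < 1) :
    ∃ σ, 0 < σ ∧ σ < 1 ∧ ρ < σ ∧ β * σ + γ < σ ^ 2 := by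
  have hgap : ∀ᶠ σ in 𝓝[<] (1 : ℝ), β * σ + γ < σ ^ 2 :=
    nhdsWithin_le_nhds <|
      ContinuousAt.eventually_lt (by fun_prop) (by fun_prop) (by simpa using hβγ)
  obtain ⟨σ, hσ, hσmem⟩ := (hgap.and (Ioo_mem_nhdsLT (max_lt hρ one_pos))).exists
  exact ⟨σ, (le_max_right _ _).trans_lt hσmem.1, hσmem.2, (le_max_left _ _).trans_lt hσmem.1, hσ⟩

theorem le_mul_pow_of_le_two_step {a : ℕ → ℝ} {β γ σ M K : ℝ} (hβ : 0 ≤ β) (hγ : 0 ≤ γ)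
    (hσ : 0 ≤ σ) (h0 : a 0 ≤ M) (h1 : a 1 ≤ M * σ)
    (hrec : ∀ t, a (t + 2) ≤ β * a (t + 1) + γ * a t + K * σ ^ t)
    (hM : β * (M * σ) + γ * M + K ≤ M * σ ^ 2) (t : ℕ) : a t ≤ M * σ ^ t := by
  induction t using Nat.twoStepInduction with
  | zero => simpa using h0
  | one => simpa using h1
  | more t iht iht₁ =>
    calc a (t + 2) ≤ β * a (t + 1) + γ * a t + K * σ ^ t := hrec t
      _ ≤ β * (M * σ ^ (t + 1)) + γ * (M * σ ^ t) + K * σ ^ t := by gcongr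
      _ = (β * (M * σ) + γ * M + K) * σ ^ t := by ring
      _ ≤ M * σ ^ 2 * σ ^ t := by gcongr
      _ = M * σ ^ (t + 2) := by ring

theorem exists_pos_forcing_le_gap {β γ σ c : ℝ} (hσ : 0 < σ) (hgap : β * σ + γ < σ ^ 2)
    (hc : 0 < c) : ∃ M, 0 < M ∧ c ≤ M * σ ∧ β * (M * σ) + γ * M + c * σ ≤ M * σ ^ 2 := by
  set g := σ ^ 2 - (β * σ + γ) with hg_def
  have hg : 0 < g := sub_pos.mpr hgap
  refine ⟨c / σ + c * σ / g, by positivity, ?_, ?_⟩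
  · have : (c / σ + c * σ / g) * σ = c + c * σ ^ 2 / g := by field_simp
    linarith [show 0 ≤ c * σ ^ 2 / g by positivity]
  · have : (c / σ + c * σ / g) * g = c * g / σ + c * σ := by field_simp
    linarith [show 0 ≤ c * g / σ by positivity]

/-- Geometric decay of perturbations: with `β, γ ≥ 0`, `β + γ < 1`, step sizes
`0 ≤ η_t ≤ c·ρ₀^t` for some `c > 0` and `0 ≤ ρ₀ < 1`, and uniformly bounded
forcing terms `‖d_t‖ ≤ δ`, the sequence `Δ_0 = 0`, `Δ_1 = η_0 • d_0`,
`Δ_{t+2} = β • Δ_{t+1} + γ • Δ_t + η_{t+1} • d_{t+1}` decays geometrically: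
there are `C > 0` and `σ ∈ (0,1)` with `‖Δ_T‖ ≤ C·δ·σ^T` for all `T`. -/
theorem perturbation_geometric_decay
    {E : Type*} [NormedAddCommGroup E] [NormedSpace ℝ E]
    (β γ : ℝ) (hβ : 0 ≤ β) (hγ : 0 ≤ γ) (hβγ : β + γ < 1)
    (c : ℝ) (hc : 0 < c) (ρ₀ : ℝ) (hρ₀ : 0 ≤ ρ₀) (hρ₀' : ρ₀ < 1)
    (η : ℕ → ℝ) (hη : ∀ t, 0 ≤ η t) (hη' : ∀ t, η t ≤ c * ρ₀ ^ t)
    (δ : ℝ) (hδ : 0 < δ) (d : ℕ → E) (hd : ∀ t, ‖d t‖ ≤ δ)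
    (Δ : ℕ → E) (hΔ0 : Δ 0 = 0) (hΔ1 : Δ 1 = η 0 • d 0)
    (hΔrec : ∀ t : ℕ, Δ (t + 2) = β • Δ (t + 1) + γ • Δ t + η (t + 1) • d (t + 1)) :
    ∃ C > (0 : ℝ), ∃ σ : ℝ, 0 < σ ∧ σ < 1 ∧ ∀ T : ℕ, ‖Δ T‖ ≤ C * δ * σ ^ T := by
  obtain ⟨σ, hσ0, hσ1, hρσ, hgap⟩ := exists_lt_one_mul_add_lt_sq hβγ hρ₀'
  have hforce (t : ℕ) : ‖η t • d t‖ ≤ c * δ * σ ^ t := by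
    rw [norm_smul, Real.norm_of_nonneg (hη t)]
    calc η t * ‖d t‖ ≤ c * σ ^ t * δ := by
          gcongr
          exacts [(hη' t).trans (by gcongr), hd t]
      _ = c * δ * σ ^ t := by ring
  obtain ⟨M, hM0, hMσ, hMgap⟩ := exists_pos_forcing_le_gap hσ0 hgap hc
  refine ⟨M, hM0, σ, hσ0, hσ1, le_mul_pow_of_le_two_step (K := c * δ * σ) hβ hγ hσ0.le
    (by rw [hΔ0, norm_zero]; positivity) ?_ (fun t => ?_)
    (by linarith [mul_le_mul_of_nonneg_right hMgap hδ.le])⟩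
  · calc ‖Δ 1‖ ≤ c * δ := by simpa [hΔ1] using hforce 0
      _ ≤ M * δ * σ := by rw [mul_right_comm]; exact mul_le_mul_of_nonneg_right hMσ hδ.le
  · calc ‖Δ (t + 2)‖ ≤ ‖β • Δ (t + 1)‖ + ‖γ • Δ t‖ + ‖η (t + 1) • d (t + 1)‖ :=
          hΔrec t ▸ norm_add₃_le
      _ ≤ β * ‖Δ (t + 1)‖ + γ * ‖Δ t‖ + c * δ * σ * σ ^ t := by
          rw [norm_smul, norm_smul, Real.norm_of_nonneg hβ, Real.norm_of_nonneg hγ, mul_assoc,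
            ← pow_succ']
          gcongr
          exact hforce _
end
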